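/- (Weak converse / Stein upper bound for adaptive channel discrimination) If a sequence of adaptive strategies and tests (P⃗ⁿ, f_n) satisfies E_{Q_{W,P⃗ⁿ}}[f_n] → 0, then limsup_{n→∞} (−1/n) log E_{Q_{W̄,P⃗ⁿ}}[1−f_n] ≤ sup_{x∈X} D(W_x‖W̄_x). -/

import Mathlib

/-!
By the chain rule, the divergence between the laws of the `n` input-output pairs under `W` and
under `W̄` is the sum over the rounds of the expected divergence `D(W_x‖W̄_x)` of the input used,
hence at most `n C` with `C = sup_x D(W_x‖W̄_x)`. Processing the pairs by the test `f_n` can only decrease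
the divergence, and the binary divergence of the two error pairs is at least
`(1 - α_n)(-log β_n) - 2`, where `α_n → 0` is the first-type and `β_n` the second-type error.
Dividing by `n` gives `-log β_n / n ≤ (C + 2 / n) / (1 - α_n) → C`.
-/

open Filter

/-- `W` is a (classical) channel from `X` to `Y` with full-support outputs. -/
def IsChannel {X Y : Type*} [Fintype Y] (W : X → Y → ℝ) : Prop :=
  ∀ x, (∀ y, 0 < W x y) ∧ ∑ y, W x y = 1

/-- An adaptive strategy: for each step `k`, a conditional distribution of the
`(k+1)`-st input given the first `k` input-output pairs. -/
def IsStrategy {X Y : Type*} [Fintype X]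
    (strat : (k : ℕ) → (Fin k → X × Y) → X → ℝ) : Prop :=
  ∀ k h, (∀ x, 0 ≤ strat k h x) ∧ ∑ x, strat k h x = 1

/-- Joint distribution of `n` adaptive input-output pairs under channel `W`. -/
noncomputable def Qdist {X Y : Type*} [Fintype X] [Fintype Y] (W : X → Y → ℝ)
    (strat : (k : ℕ) → (Fin k → X × Y) → X → ℝ) (n : ℕ) (h : Fin n → X × Y) : ℝ :=
  ∏ k : Fin n,
    strat k.1 (fun j : Fin k.1 => h ⟨j.1, j.2.trans k.2⟩) (h k).1 * W (h k).1 (h k).2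

/-- Marginal distribution of the `(k+1)`-st input under channel `W`. -/
noncomputable def inMarg {X Y : Type*} [Fintype X] [Fintype Y] (W : X → Y → ℝ)
    (strat : (k : ℕ) → (Fin k → X × Y) → X → ℝ) (k : ℕ) (x : X) : ℝ :=
  ∑ h : Fin k → X × Y, Qdist W strat k h * strat k h x

/-- Kullback–Leibler divergence of finitely supported distributions. -/
noncomputable def Dkl {α : Type*} [Fintype α] (P Q : α → ℝ) : ℝ :=
  ∑ a, P a * Real.log (P a / Q a)

/-- `φ(s|P‖Q) = log ∑ Q^s P^{1-s}`. -/
noncomputable def phiRel {α : Type*} [Fintype α] (s : ℝ) (P Q : α → ℝ) : ℝ :=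
  Real.log (∑ a, Q a ^ s * P a ^ (1 - s))

open Finset Real

section FiniteDivergence

variable {α β : Type*} [Fintype α] [Fintype β]

lemma mul_log_add_sub_mul_le_mul_log_div {p q r : ℝ} (hp : 0 ≤ p) (hq : 0 ≤ q)
    (hpq : p ≠ 0 → q ≠ 0) (hr : 0 < r) :
    p * log r + p - r * q ≤ p * log (p / q) := by
  rcases hp.eq_or_lt with rfl | hp
  · simpa using mul_nonneg hr.le hq
  have hq : 0 < q := hq.lt_of_ne (hpq hp.ne').symm
  have h := one_sub_inv_le_log_of_pos (show 0 < p / (q * r) by positivity)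
  rw [log_div hp.ne' (by positivity), log_mul hq.ne' hr.ne', inv_div] at h
  have h' := mul_le_mul_of_nonneg_left h hp.le
  have hlhs : p * (1 - q * r / p) = p - r * q := by field_simp
  rw [log_div hp.ne' hq.ne']
  linarith

theorem sum_mul_log_div_sum_le {ι : Type*} (s : Finset ι) {p q : ι → ℝ}
    (hp : ∀ i ∈ s, 0 ≤ p i) (hq : ∀ i ∈ s, 0 ≤ q i) (hpq : ∀ i ∈ s, p i ≠ 0 → q i ≠ 0) :
    (∑ i ∈ s, p i) * log ((∑ i ∈ s, p i) / ∑ i ∈ s, q i) ≤ ∑ i ∈ s, p i * log (p i / q i) := by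
  rcases (sum_nonneg hp).eq_or_lt with hP | hP
  · have hp0 := (sum_eq_zero_iff_of_nonneg hp).1 hP.symm
    rw [← hP, zero_mul]
    exact (sum_eq_zero fun i hi => by simp [hp0 i hi]).ge
  have hQ : 0 < ∑ i ∈ s, q i := by
    obtain ⟨i, hi, hpi⟩ := exists_ne_zero_of_sum_ne_zero hP.ne'
    exact sum_pos' hq ⟨i, hi, (hq i hi).lt_of_ne (hpq i hi hpi).symm⟩
  calc (∑ i ∈ s, p i) * log ((∑ i ∈ s, p i) / ∑ i ∈ s, q i)
      = ∑ i ∈ s, (p i * log ((∑ i ∈ s, p i) / ∑ i ∈ s, q i) + p i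
          - (∑ i ∈ s, p i) / (∑ i ∈ s, q i) * q i) := by
        rw [sum_sub_distrib, sum_add_distrib, ← sum_mul, ← mul_sum, div_mul_cancel₀ _ hQ.ne']
        ring
    _ ≤ ∑ i ∈ s, p i * log (p i / q i) :=
        sum_le_sum fun i hi =>
          mul_log_add_sub_mul_le_mul_log_div (hp i hi) (hq i hi) (hpq i hi) (div_pos hP hQ)

lemma neg_one_le_mul_log_div {a b : ℝ} (ha : 0 ≤ a) (hb₀ : 0 ≤ b) (hb₁ : b ≤ 1) :
    -1 ≤ a * log (a / b) := by
  rcases ha.eq_or_lt with rfl | ha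
  · simp
  rcases hb₀.eq_or_lt with rfl | hb
  · simp
  calc -1 ≤ a - 1 := by linarith
    _ ≤ a * log a := self_sub_one_le_mul_log ha.le
    _ ≤ a * log (a / b) := by gcongr; exact le_div_self ha.le hb hb₁

lemma sum_mul_mem_Icc {P g : α → ℝ} (hP : ∀ a, 0 ≤ P a) (hP₁ : ∑ a, P a = 1)
    (hg : ∀ a, g a ∈ Set.Icc (0 : ℝ) 1) : ∑ a, P a * g a ∈ Set.Icc (0 : ℝ) 1 :=
  ⟨sum_nonneg fun a _ => mul_nonneg (hP a) (hg a).1,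
    hP₁ ▸ sum_le_sum fun a _ => mul_le_of_le_one_right (hP a) (hg a).2⟩

lemma Dkl_self (P : α → ℝ) : Dkl P P = 0 :=
  sum_eq_zero fun a _ => by
    rcases eq_or_ne (P a) 0 with h | h <;> simp [h]

lemma Dkl_comp_equiv (e : β ≃ α) (P Q : α → ℝ) : Dkl (P ∘ e) (Q ∘ e) = Dkl P Q :=
  Fintype.sum_equiv e _ _ fun _ => rfl

lemma mul_log_mul_div_mul {p q r s : ℝ} (hpq : p ≠ 0 → q ≠ 0) (hrs : r ≠ 0 → s ≠ 0) :
    p * r * log (p * r / (q * s)) = p * r * log (p / q) + p * r * log (r / s) := by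
  rcases eq_or_ne p 0 with rfl | hp
  · simp
  rcases eq_or_ne r 0 with rfl | hr
  · simp
  rw [mul_div_mul_comm, log_mul (div_ne_zero hp (hpq hp)) (div_ne_zero hr (hrs hr))]
  ring

theorem Dkl_mul_kernel {p q : α → ℝ} {k l : α → β → ℝ} (hk : ∀ a, ∑ b, k a b = 1)
    (hpq : ∀ a, p a ≠ 0 → q a ≠ 0) (hkl : ∀ a b, k a b ≠ 0 → l a b ≠ 0) :
    Dkl (fun z : α × β => p z.1 * k z.1 z.2) (fun z => q z.1 * l z.1 z.2) =
      Dkl p q + ∑ a, p a * Dkl (k a) (l a) := by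
  rw [Dkl, Fintype.sum_prod_type, Dkl, ← sum_add_distrib]
  refine sum_congr rfl fun a _ => ?_
  simp only [mul_log_mul_div_mul (hpq a) (hkl a _), sum_add_distrib, Dkl, mul_sum]
  congr 1
  · rw [← sum_mul, ← mul_sum, hk, mul_one]
  · exact sum_congr rfl fun b _ => by ring

theorem binary_divergence_le_Dkl {P Q f : α → ℝ} (hP : ∀ a, 0 ≤ P a) (hQ : ∀ a, 0 ≤ Q a)
    (hPQ : ∀ a, P a ≠ 0 → Q a ≠ 0) (hf : ∀ a, f a ∈ Set.Icc (0 : ℝ) 1) :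
    (∑ a, P a * f a) * log ((∑ a, P a * f a) / ∑ a, Q a * f a) +
      (∑ a, P a * (1 - f a)) * log ((∑ a, P a * (1 - f a)) / ∑ a, Q a * (1 - f a)) ≤
      Dkl P Q := by
  have weighted : ∀ g : α → ℝ, (∀ a, 0 ≤ g a) →
      (∑ a, P a * g a) * log ((∑ a, P a * g a) / ∑ a, Q a * g a) ≤
        ∑ a, P a * g a * log (P a / Q a) := by
    intro g hg
    refine (sum_mul_log_div_sum_le univ (fun a _ => mul_nonneg (hP a) (hg a))
      (fun a _ => mul_nonneg (hQ a) (hg a)) fun a _ h => ?_).trans_eq (sum_congr rfl fun a _ => ?_)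
    · exact mul_ne_zero (hPQ a (left_ne_zero_of_mul h)) (right_ne_zero_of_mul h)
    · rcases eq_or_ne (g a) 0 with hga | hga
      · simp [hga]
      · rw [mul_div_mul_right _ _ hga]
  have hsplit : Dkl P Q = ∑ a, P a * f a * log (P a / Q a) +
      ∑ a, P a * (1 - f a) * log (P a / Q a) := by
    rw [Dkl, ← sum_add_distrib]
    exact sum_congr rfl fun a _ => by ring
  rw [hsplit]
  exact add_le_add (weighted f fun a => (hf a).1) (weighted _ fun a => sub_nonneg.2 (hf a).2)

theorem one_sub_mul_neg_log_le_Dkl_add_two {P Q f : α → ℝ} (hP : ∀ a, 0 ≤ P a)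
    (hQ : ∀ a, 0 ≤ Q a) (hPQ : ∀ a, P a ≠ 0 → Q a ≠ 0) (hP₁ : ∑ a, P a = 1)
    (hQ₁ : ∑ a, Q a = 1) (hf : ∀ a, f a ∈ Set.Icc (0 : ℝ) 1) :
    (1 - ∑ a, P a * f a) * -log (∑ a, Q a * (1 - f a)) ≤ Dkl P Q + 2 := by
  have hf' : ∀ a, 1 - f a ∈ Set.Icc (0 : ℝ) 1 := fun a =>
    ⟨sub_nonneg.2 (hf a).2, sub_le_self _ (hf a).1⟩
  have hdpi := binary_divergence_le_Dkl hP hQ hPQ hf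
  have hPf : ∑ a, P a * (1 - f a) = 1 - ∑ a, P a * f a := by
    simp only [mul_one_sub, sum_sub_distrib, hP₁]
  rw [hPf] at hdpi
  have ha := sum_mul_mem_Icc hP hP₁ hf
  have hb := sum_mul_mem_Icc hQ hQ₁ hf
  have herr₂_mem := sum_mul_mem_Icc hQ hQ₁ hf'
  have hfirst := neg_one_le_mul_log_div ha.1 hb.1 hb.2
  set err₁ := ∑ x, P x * f x
  set err₂ := ∑ x, Q x * (1 - f x)
  rcases herr₂_mem.1.eq_or_lt with herr₂ | herr₂
  -- `log 0 = 0`: the left side vanishes and `hdpi` degenerates to `-1 ≤ Dkl P Q`.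
  · rw [← herr₂] at hdpi ⊢
    simp only [div_zero, log_zero, mul_zero, neg_zero, add_zero] at hdpi ⊢
    linarith
  have hsplit : (1 - err₁) * log ((1 - err₁) / err₂) =
      (1 - err₁) * log (1 - err₁) + (1 - err₁) * -log err₂ := by
    rcases eq_or_ne (1 - err₁) 0 with h | h
    · simp [h]
    · rw [log_div h herr₂.ne']
      ring
  have hsecond := self_sub_one_le_mul_log (sub_nonneg.2 ha.2)
  linarith [ha.2]

end FiniteDivergence

section AdaptiveStrategy

variable {X Y : Type*} {W Wb : X → Y → ℝ} {strat : (k : ℕ) → (Fin k → X × Y) → X → ℝ}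

/-- The conditional law of the `(n+1)`-st input-output pair given the history `h`. -/
def stepKernel (W : X → Y → ℝ) (strat : (k : ℕ) → (Fin k → X × Y) → X → ℝ) (n : ℕ)
    (h : Fin n → X × Y) (z : X × Y) : ℝ :=
  strat n h z.1 * W z.1 z.2

def snocProdEquiv (α : Type*) (n : ℕ) : (Fin n → α) × α ≃ (Fin (n + 1) → α) :=
  (Equiv.prodComm _ _).trans (Fin.snocEquiv fun _ => α)

lemma snocProdEquiv_apply {α : Type*} (n : ℕ) (z : (Fin n → α) × α) :
    snocProdEquiv α n z = Fin.snoc z.1 z.2 :=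
  rfl

variable [Fintype Y]

lemma stepKernel_ne_zero (hWb : IsChannel Wb) {n : ℕ} {h : Fin n → X × Y} {z : X × Y}
    (hz : stepKernel W strat n h z ≠ 0) : stepKernel Wb strat n h z ≠ 0 :=
  mul_ne_zero (left_ne_zero_of_mul hz) ((hWb _).1 _).ne'

variable [Fintype X]

lemma sum_stepKernel (hW : IsChannel W) (hstrat : IsStrategy strat) (n : ℕ)
    (h : Fin n → X × Y) : ∑ z, stepKernel W strat n h z = 1 := by
  simp only [stepKernel, Fintype.sum_prod_type, ← mul_sum, (hW _).2, mul_one, (hstrat n h).2]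

lemma Dkl_stepKernel (hW : IsChannel W) (hWb : IsChannel Wb) (n : ℕ) (h : Fin n → X × Y) :
    Dkl (stepKernel W strat n h) (stepKernel Wb strat n h) =
      ∑ x, strat n h x * Dkl (W x) (Wb x) := by
  unfold stepKernel
  rw [Dkl_mul_kernel (fun x => (hW x).2) (fun _ => id)
    fun x y _ => ((hWb x).1 y).ne', Dkl_self, zero_add]

lemma Qdist_snoc (W : X → Y → ℝ) (strat : (k : ℕ) → (Fin k → X × Y) → X → ℝ) (n : ℕ)
    (h : Fin n → X × Y) (z : X × Y) :
    Qdist W strat (n + 1) (Fin.snoc h z) = Qdist W strat n h * stepKernel W strat n h z := by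
  rw [Qdist, Fin.prod_univ_castSucc]
  congr 1
  · refine prod_congr rfl fun k _ => ?_
    simp only [Fin.snoc_castSucc]
    exact congrArg (fun g => strat k g (h k).1 * W (h k).1 (h k).2)
      (funext fun j => Fin.snoc_castSucc (α := fun _ => X × Y) z h ⟨j, j.2.trans k.2⟩)
  · simp only [Fin.snoc_last, stepKernel]
    exact congrArg (fun g => strat n g z.1 * W z.1 z.2)
      (funext fun j => Fin.snoc_castSucc (α := fun _ => X × Y) z h j)

lemma Qdist_nonneg (hW : IsChannel W) (hstrat : IsStrategy strat) (n : ℕ)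
    (h : Fin n → X × Y) : 0 ≤ Qdist W strat n h :=
  prod_nonneg fun _ _ => mul_nonneg ((hstrat _ _).1 _) ((hW _).1 _).le

lemma Qdist_ne_zero (hWb : IsChannel Wb) {n : ℕ} {h : Fin n → X × Y}
    (hh : Qdist W strat n h ≠ 0) : Qdist Wb strat n h ≠ 0 :=
  prod_ne_zero_iff.2 fun k _ =>
    mul_ne_zero (left_ne_zero_of_mul (prod_ne_zero_iff.1 hh k (mem_univ k))) ((hWb _).1 _).ne'

lemma sum_Qdist (hW : IsChannel W) (hstrat : IsStrategy strat) (n : ℕ) :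
    ∑ h, Qdist W strat n h = 1 := by
  induction n with
  | zero => simp [Qdist]
  | succ n ih =>
    rw [← (snocProdEquiv (X × Y) n).sum_comp, Fintype.sum_prod_type]
    simp only [snocProdEquiv_apply, Qdist_snoc, ← mul_sum, sum_stepKernel hW hstrat, mul_one, ih]

lemma inMarg_nonneg (hW : IsChannel W) (hstrat : IsStrategy strat) (n : ℕ) (x : X) :
    0 ≤ inMarg W strat n x :=
  sum_nonneg fun h _ => mul_nonneg (Qdist_nonneg hW hstrat n h) ((hstrat n h).1 x)

lemma sum_inMarg (hW : IsChannel W) (hstrat : IsStrategy strat) (n : ℕ) :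
    ∑ x, inMarg W strat n x = 1 := by
  unfold inMarg
  rw [sum_comm]
  simp only [← mul_sum, (hstrat n _).2, mul_one, sum_Qdist hW hstrat]

theorem Dkl_Qdist_succ (hW : IsChannel W) (hWb : IsChannel Wb) (hstrat : IsStrategy strat)
    (n : ℕ) :
    Dkl (Qdist W strat (n + 1)) (Qdist Wb strat (n + 1)) =
      Dkl (Qdist W strat n) (Qdist Wb strat n) +
        ∑ x, inMarg W strat n x * Dkl (W x) (Wb x) := by
  rw [← Dkl_comp_equiv (snocProdEquiv (X × Y) n)]
  simp only [Function.comp_def, snocProdEquiv_apply, Qdist_snoc]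
  rw [Dkl_mul_kernel (p := Qdist W strat n) (q := Qdist Wb strat n) (k := stepKernel W strat n)
    (l := stepKernel Wb strat n) (sum_stepKernel hW hstrat n) (fun _ => Qdist_ne_zero hWb)
      fun _ _ => stepKernel_ne_zero hWb]
  simp only [Dkl_stepKernel hW hWb, inMarg, mul_sum, sum_mul]
  rw [sum_comm]
  simp only [mul_assoc]

theorem Dkl_Qdist_le (hW : IsChannel W) (hWb : IsChannel Wb) (hstrat : IsStrategy strat)
    {C : ℝ} (hC : ∀ x, Dkl (W x) (Wb x) ≤ C) (n : ℕ) :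
    Dkl (Qdist W strat n) (Qdist Wb strat n) ≤ n * C := by
  induction n with
  | zero => simp [Dkl, Qdist]
  | succ n ih =>
    rw [Dkl_Qdist_succ hW hWb hstrat, Nat.cast_succ, add_one_mul]
    gcongr
    calc ∑ x, inMarg W strat n x * Dkl (W x) (Wb x) ≤ ∑ x, inMarg W strat n x * C :=
          sum_le_sum fun x _ => mul_le_mul_of_nonneg_left (hC x) (inMarg_nonneg hW hstrat n x)
      _ = C := by rw [← sum_mul, sum_inMarg hW hstrat, one_mul]

end AdaptiveStrategy

theorem stmt12_general {X Y : Type*} [Fintype X] [Fintype Y]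
    (W Wb : X → Y → ℝ) (hW : IsChannel W) (hWb : IsChannel Wb)
    (strats : ℕ → (k : ℕ) → (Fin k → X × Y) → X → ℝ)
    (hstrats : ∀ n, IsStrategy (strats n))
    (f : (n : ℕ) → (Fin n → X × Y) → ℝ)
    (hf : ∀ n h, f n h ∈ Set.Icc (0 : ℝ) 1)
    (herr1 : Tendsto
      (fun n => ∑ h : Fin n → X × Y, Qdist W (strats n) n h * f n h)
      atTop (nhds 0)) :
    Filter.limsup
      (fun n : ℕ => (-1 / (n : ℝ)) *
        Real.log (∑ h : Fin n → X × Y, Qdist Wb (strats n) n h * (1 - f n h)))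
      atTop ≤ ⨆ x, Dkl (W x) (Wb x) := by
  set C := ⨆ x, Dkl (W x) (Wb x)
  set α := fun n => ∑ h : Fin n → X × Y, Qdist W (strats n) n h * f n h
  set β := fun n => ∑ h : Fin n → X × Y, Qdist Wb (strats n) n h * (1 - f n h)
  have hβ n : β n ∈ Set.Icc (0 : ℝ) 1 :=
    sum_mul_mem_Icc (Qdist_nonneg hWb (hstrats n) n) (sum_Qdist hWb (hstrats n) n)
      fun h => ⟨sub_nonneg.2 (hf n h).2, sub_le_self _ (hf n h).1⟩
  have hbound : ∀ᶠ n : ℕ in atTop, -1 / (n : ℝ) * log (β n) ≤ (C + 2 / n) / (1 - α n) := by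
    filter_upwards [herr1.eventually_lt_const one_pos, eventually_ge_atTop 1] with n hα hn
    have hn : (0 : ℝ) < n := by exact_mod_cast hn
    have hD := Dkl_Qdist_le hW hWb (hstrats n) (le_ciSup (Set.finite_range _).bddAbove) n
    have hconv := one_sub_mul_neg_log_le_Dkl_add_two (Qdist_nonneg hW (hstrats n) n)
      (Qdist_nonneg hWb (hstrats n) n) (fun _ => Qdist_ne_zero hWb) (sum_Qdist hW (hstrats n) n)
      (sum_Qdist hWb (hstrats n) n) (hf n)
    rw [le_div_iff₀ (sub_pos.2 hα)]
    calc -1 / (n : ℝ) * log (β n) * (1 - α n) = (1 - α n) * -log (β n) / n := by ring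
      _ ≤ (n * C + 2) / n := by gcongr; linarith
      _ = C + 2 / n := by field_simp
  have hlim : Tendsto (fun n : ℕ => (C + 2 / n) / (1 - α n)) atTop (nhds C) := by
    have h := ((tendsto_const_nhds (x := C)).add (tendsto_const_div_atTop_nhds_zero_nat 2)).div
      ((tendsto_const_nhds (x := (1 : ℝ))).sub herr1) (by norm_num)
    rwa [add_zero, sub_zero, div_one] at h
  calc limsup (fun n : ℕ => -1 / (n : ℝ) * log (β n)) atTop
      ≤ limsup (fun n : ℕ => (C + 2 / n) / (1 - α n)) atTop :=
        limsup_le_limsup hbound (isCoboundedUnder_le_of_le atTop fun n =>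
          mul_nonneg_of_nonpos_of_nonpos (div_nonpos_of_nonpos_of_nonneg (by norm_num)
            n.cast_nonneg) (log_nonpos (hβ n).1 (hβ n).2)) hlim.isBoundedUnder_le
    _ = C := hlim.limsup_eq

theorem stmt12 {X Y : Type*} [Fintype X] [Fintype Y] [Nonempty X]
    (W Wb : X → Y → ℝ) (hW : IsChannel W) (hWb : IsChannel Wb)
    (strats : ℕ → (k : ℕ) → (Fin k → X × Y) → X → ℝ)
    (hstrats : ∀ n, IsStrategy (strats n))
    (f : (n : ℕ) → (Fin n → X × Y) → ℝ)
    (hf : ∀ n h, f n h ∈ Set.Icc (0 : ℝ) 1)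
    (herr1 : Tendsto
      (fun n => ∑ h : Fin n → X × Y, Qdist W (strats n) n h * f n h)
      atTop (nhds 0)) :
    Filter.limsup
      (fun n : ℕ => (-1 / (n : ℝ)) *
        Real.log (∑ h : Fin n → X × Y, Qdist Wb (strats n) n h * (1 - f n h)))
      atTop ≤ ⨆ x, Dkl (W x) (Wb x) :=
  stmt12_general W Wb hW hWb strats hstrats f hf herr1
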